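/- Let C be a k-dimensional linear code in F_q^n, let 0 ≤ e ≤ h−1, and let G be any generator matrix of C. Then the following four statements are equivalent: (1) C is e-Galois LCD; (2) C is (h−e)-Galois LCD; (3) the k×k matrix G·σ^e(G^T) is nonsingular; (4) the k×k matrix G·σ^{h−e}(G^T) is nonsingular. -/

import Mathlib

open Finset

variable {F : Type*}

/-- The `e`-Galois dual of a linear code `C ⊆ F_q^n` (`q = p^h`):
`C^{⊥_e} = {x | ∀ c ∈ C, ∑ i, x i * (c i)^(p^e) = 0}`. -/
def galoisDual [Field F] (p e : ℕ) {n : ℕ} (C : Submodule F (Fin n → F)) :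
    Submodule F (Fin n → F) where
  carrier := {x | ∀ c ∈ C, ∑ i, x i * c i ^ p ^ e = 0}
  add_mem' := by
    intro a b ha hb c hc
    have h1 := ha c hc
    have h2 := hb c hc
    show ∑ i, (a + b) i * c i ^ p ^ e = 0
    simp only [Pi.add_apply, add_mul, Finset.sum_add_distrib, h1, h2, add_zero]
  zero_mem' := by
    intro c hc
    simp
  smul_mem' := by
    intro r a ha c hc
    have h1 := ha c hc
    show ∑ i, (r • a) i * c i ^ p ^ e = 0
    simp only [Pi.smul_apply, smul_eq_mul, mul_assoc, ← Finset.mul_sum, h1, mul_zero]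

/-- The `e`-Galois hull of `C`: `Hull_e(C) = C ∩ C^{⊥_e}`. -/
def galoisHull [Field F] (p e : ℕ) {n : ℕ} (C : Submodule F (Fin n → F)) :
    Submodule F (Fin n → F) :=
  C ⊓ galoisDual p e C

/-- `G` is a generator matrix of `C`: its rows form a basis of `C`. -/
def IsGenMatrix [Field F] {n k : ℕ} (C : Submodule F (Fin n → F))
    (G : Matrix (Fin k) (Fin n) F) : Prop :=
  LinearIndependent F (fun i : Fin k => G i) ∧
    Submodule.span F (Set.range fun i : Fin k => G i) = C

/-- `d` is the minimum (Hamming) distance of the linear code `C`. -/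
def IsMinDist [Field F] [DecidableEq F] {n : ℕ} (C : Submodule F (Fin n → F)) (d : ℕ) : Prop :=
  (∃ c ∈ C, c ≠ 0 ∧ hammingNorm c = d) ∧ ∀ c ∈ C, c ≠ 0 → d ≤ hammingNorm c

/-!
Write the codewords of `C` as `y ᵥ* G`. Testing orthogonality against the rows of `G` suffices
(the `e`-Galois form is `σ^e`-semilinear in its second argument), so `y ᵥ* G` lies in the
`e`-Galois dual exactly when `y` is a left null vector of `G·σ^e(Gᵀ)`; as `y ↦ y ᵥ* G` is
injective, the hull is trivial iff this Gram matrix is nonsingular. Since `σ^h = id` on `F_q`,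
the `(h - e)`-Gram matrix is `σ^(h-e)` of the transposed `e`-Gram matrix, and a ring
automorphism applied entrywise preserves invertibility.
-/

open Matrix

abbrev galoisGram [CommRing F] (p e : ℕ) {k n : ℕ} (G : Matrix (Fin k) (Fin n) F) :
    Matrix (Fin k) (Fin k) F :=
  G * G.transpose.map fun a => a ^ p ^ e

section Dual

variable [Field F] (p : ℕ) [ExpChar F p] (e : ℕ) {n : ℕ}

def galoisAnnihilator (x : Fin n → F) : Submodule F (Fin n → F) where
  carrier := {c | ∑ i, x i * c i ^ p ^ e = 0}
  add_mem' := by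
    intro a b ha hb
    simp only [Set.mem_ofPred_eq, Pi.add_apply, add_pow_expChar_pow, mul_add,
      Finset.sum_add_distrib] at ha hb ⊢
    rw [ha, hb, add_zero]
  zero_mem' := by simp [zero_pow (pow_ne_zero e (expChar_ne_zero F p))]
  smul_mem' := by
    intro r c hc
    simp only [Set.mem_ofPred_eq, Pi.smul_apply, smul_eq_mul, mul_pow] at hc ⊢
    simp_rw [mul_left_comm _ (r ^ p ^ e), ← Finset.mul_sum, hc, mul_zero]

theorem mem_galoisDual_iff_vecMul_eq_zero {k : ℕ} {C : Submodule F (Fin n → F)}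
    {G : Matrix (Fin k) (Fin n) F} (hG : IsGenMatrix C G) (x : Fin n → F) :
    x ∈ galoisDual p e C ↔ x ᵥ* G.transpose.map (fun a => a ^ p ^ e) = 0 := by
  change C ≤ galoisAnnihilator p e x ↔ _
  rw [← hG.2, Submodule.span_le, Set.range_subset_iff, funext_iff]
  simp [galoisAnnihilator, vecMul, dotProduct]

theorem galoisHull_eq_bot_iff_isUnit_galoisGram {k : ℕ} {C : Submodule F (Fin n → F)}
    {G : Matrix (Fin k) (Fin n) F} (hG : IsGenMatrix C G) :
    galoisHull p e C = ⊥ ↔ IsUnit (galoisGram p e G) := by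
  have hC (x : Fin n → F) : x ∈ C ↔ ∃ y, y ᵥ* G = x := by
    rw [← hG.2]
    exact (SetLike.ext_iff.mp (range_vecMulLinear G) x).symm
  have hGinj : Function.Injective G.vecMul := vecMul_injective_iff.mpr hG.1
  rw [← vecMul_injective_iff_isUnit, ← coe_vecMulLinear, injective_iff_map_eq_zero,
    Submodule.eq_bot_iff]
  simp only [galoisHull, Submodule.mem_inf, and_imp, hC, forall_exists_index,
    forall_apply_eq_imp_iff, coe_vecMulLinear, mem_galoisDual_iff_vecMul_eq_zero p e hG,
    vecMul_vecMul]
  exact forall_congr' fun y => imp_congr_right fun _ => hGinj.eq_iff' (zero_vecMul G)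

end Dual

section Swap

variable [CommRing F] (p : ℕ) [ExpChar F p] {e f h k n : ℕ}

theorem galoisGram_eq_map_transpose (G : Matrix (Fin k) (Fin n) F) (hef : e + f = h)
    (hq : ∀ a : F, a ^ p ^ h = a) :
    galoisGram p f G = (galoisGram p e G).transpose.map (iterateFrobenius F p f) := by
  ext i j
  simp only [galoisGram, map_apply, transpose_apply, mul_apply, map_sum, iterateFrobenius_def]
  refine Finset.sum_congr rfl fun l _ => ?_
  rw [mul_pow, ← pow_mul, ← pow_add, hef, hq, mul_comm]

theorem isUnit_galoisGram_of_add_eq (G : Matrix (Fin k) (Fin n) F) (hef : e + f = h)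
    (hq : ∀ a : F, a ^ p ^ h = a) (hu : IsUnit (galoisGram p e G)) :
    IsUnit (galoisGram p f G) := by
  rw [galoisGram_eq_map_transpose p G hef hq]
  exact ((isUnit_transpose _).mpr hu).map (iterateFrobenius F p f).mapMatrix

end Swap

theorem galois_LCD_tfae_general
    (p h : ℕ) (hp : p.Prime)
    [Field F] [Fintype F] (hcard : Fintype.card F = p ^ h)
    (n k e : ℕ) (he : e ≤ h - 1)
    (C : Submodule F (Fin n → F))
    (G : Matrix (Fin k) (Fin n) F) (hG : IsGenMatrix C G) :
    List.TFAE
      [galoisHull p e C = ⊥,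
       galoisHull p (h - e) C = ⊥,
       IsUnit (G * (G.transpose.map fun a => a ^ p ^ e)),
       IsUnit (G * (G.transpose.map fun a => a ^ p ^ (h - e)))] := by
  have : Fact p.Prime := ⟨hp⟩
  have : CharP F p := charP_of_card_eq_prime_pow hcard
  have hq : ∀ a : F, a ^ p ^ h = a := fun a => hcard ▸ FiniteField.pow_card a
  tfae_have 1 ↔ 3 := galoisHull_eq_bot_iff_isUnit_galoisGram p e hG
  tfae_have 2 ↔ 4 := galoisHull_eq_bot_iff_isUnit_galoisGram p (h - e) hG
  tfae_have 3 → 4 := isUnit_galoisGram_of_add_eq p G (by omega) hq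
  tfae_have 4 → 3 := isUnit_galoisGram_of_add_eq p G (by omega) hq
  tfae_finish

/-- Corollary: for any generator matrix `G` of the `k`-dimensional code `C`, the following are
equivalent: (1) `C` is `e`-Galois LCD; (2) `C` is `(h-e)`-Galois LCD;
(3) `G·σ^e(Gᵀ)` is nonsingular; (4) `G·σ^{h-e}(Gᵀ)` is nonsingular. -/
theorem galois_LCD_tfae
    (p h : ℕ) (hp : p.Prime) (hh : 0 < h)
    [Field F] [Fintype F] (hcard : Fintype.card F = p ^ h)
    (n k e : ℕ) (he : e ≤ h - 1)
    (C : Submodule F (Fin n → F)) (hk : Module.finrank F C = k)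
    (G : Matrix (Fin k) (Fin n) F) (hG : IsGenMatrix C G) :
    List.TFAE
      [galoisHull p e C = ⊥,
       galoisHull p (h - e) C = ⊥,
       IsUnit (G * (G.transpose.map fun a => a ^ p ^ e)),
       IsUnit (G * (G.transpose.map fun a => a ^ p ^ (h - e)))] :=
  galois_LCD_tfae_general p h hp hcard n k e he C G hG
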